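/- Let J_1,…,J_M be n×n complex matrices, λ_1,…,λ_M positive reals, and let ψ ∈ ℂⁿ be a unit vector with J_l ψ = c_l ψ for all l, for complex numbers c_1,…,c_M. If either (i) c_l = 0 for every l, or (ii) ψ is an eigenvector of the matrix Σ_{l=1}^M λ_l c_l J_lᴴ, then L_D[ψψᴴ] = 0. Consequently, a unit vector ψ can be a decoherence-free state with L_D[ψψᴴ] ≠ 0 (an incoherently-generated-coherence state) only if c_l ≠ 0 for at least one l and ψ is not an eigenvector of Σ_{l=1}^M λ_l c_l J_lᴴ. -/
import Mathlib

open Matrix BigOperators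

/-- The decoherence superoperator `L_D[ρ] = Σ_l λ_l (J_l ρ J_lᴴ − ½ J_lᴴ J_l ρ − ½ ρ J_lᴴ J_l)`. -/
noncomputable def LD {M n : ℕ} (J : Fin M → Matrix (Fin n) (Fin n) ℂ)
    (lam : Fin M → ℝ) (ρ : Matrix (Fin n) (Fin n) ℂ) : Matrix (Fin n) (Fin n) ℂ :=
  ∑ l, (lam l : ℂ) • (J l * ρ * (J l)ᴴ
    - (1 / 2 : ℂ) • ((J l)ᴴ * J l * ρ) - (1 / 2 : ℂ) • (ρ * ((J l)ᴴ * J l)))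

/-- The decoherence operator `Γ = Σ_l λ_l J_lᴴ J_l`. -/
noncomputable def Gam {M n : ℕ} (J : Fin M → Matrix (Fin n) (Fin n) ℂ)
    (lam : Fin M → ℝ) : Matrix (Fin n) (Fin n) ℂ :=
  ∑ l, (lam l : ℂ) • ((J l)ᴴ * J l)

lemma mul_vecMulVec' {n : ℕ} (A : Matrix (Fin n) (Fin n) ℂ) (u v : Fin n → ℂ) :
    A * vecMulVec u v = vecMulVec (A *ᵥ u) v := by
  ext i j
  simp [Matrix.mul_apply, vecMulVec_apply, mulVec, dotProduct, Finset.sum_mul, mul_assoc]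

lemma vecMulVec_mul' {n : ℕ} (u v : Fin n → ℂ) (A : Matrix (Fin n) (Fin n) ℂ) :
    vecMulVec u v * A = vecMulVec u (v ᵥ* A) := by
  ext i j
  simp [Matrix.mul_apply, vecMulVec_apply, vecMul, dotProduct, Finset.mul_sum, mul_assoc]

lemma dotProduct_sum' {M n : ℕ} (u : Fin n → ℂ) (f : Fin M → Fin n → ℂ) :
    u ⬝ᵥ (∑ l, f l) = ∑ l, u ⬝ᵥ f l := by
  simp only [dotProduct, Finset.sum_apply, Finset.mul_sum]
  rw [Finset.sum_comm]

lemma sum_mulVec' {M n : ℕ} (A : Fin M → Matrix (Fin n) (Fin n) ℂ) (v : Fin n → ℂ) :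
    (∑ l, A l) *ᵥ v = ∑ l, (A l) *ᵥ v := by
  ext i
  simp [mulVec, dotProduct, Matrix.sum_apply, Finset.sum_mul]
  rw [Finset.sum_comm]

/-- Let `ψ` be a unit simultaneous eigenvector of the jump operators, `J_l ψ = c_l ψ`.
If either all `c_l = 0`, or `ψ` is an eigenvector of `Σ_l λ_l c_l J_lᴴ`, then
`L_D[ψψᴴ] = 0`. Consequently an IGC state (one with `L_D[ψψᴴ] ≠ 0`) requires some
`c_l ≠ 0` and that `ψ` is not an eigenvector of `Σ_l λ_l c_l J_lᴴ`. -/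
theorem stmt14 {M n : ℕ} (J : Fin M → Matrix (Fin n) (Fin n) ℂ) (lam : Fin M → ℝ)
    (hlam : ∀ l, 0 < lam l) (ψ : Fin n → ℂ) (hψ : star ψ ⬝ᵥ ψ = 1)
    (c : Fin M → ℂ) (hc : ∀ l, (J l).mulVec ψ = c l • ψ) :
    (((∀ l, c l = 0) ∨
        ∃ μ : ℂ, (∑ l, ((lam l : ℂ) * c l) • (J l)ᴴ).mulVec ψ = μ • ψ) →
      LD J lam (vecMulVec ψ (star ψ)) = 0)
    ∧ (LD J lam (vecMulVec ψ (star ψ)) ≠ 0 →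
        (∃ l, c l ≠ 0) ∧
          ¬ ∃ μ : ℂ, (∑ l, ((lam l : ℂ) * c l) • (J l)ᴴ).mulVec ψ = μ • ψ) := by
  set ρ := vecMulVec ψ (star ψ) with hρ
  have hJρ : ∀ l, J l * ρ = c l • ρ := by
    intro l
    rw [hρ, mul_vecMulVec', hc l]
    ext i j; simp [vecMulVec_apply, mul_assoc]
  have hρJH : ∀ l, ρ * (J l)ᴴ = star (c l) • ρ := by
    intro l
    rw [hρ, vecMulVec_mul']
    have : star ψ ᵥ* (J l)ᴴ = star (c l) • star ψ := by
      rw [← star_mulVec, hc l, star_smul]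
    rw [this]
    ext i j; simp [vecMulVec_apply, mul_comm, mul_left_comm]
  set w : Fin M → Fin n → ℂ := fun l => (J l)ᴴ *ᵥ ψ with hw
  have hJHρ : ∀ l, (J l)ᴴ * ρ = vecMulVec (w l) (star ψ) := by
    intro l; rw [hρ, mul_vecMulVec']
  have hρJ : ∀ l, ρ * J l = vecMulVec ψ (star (w l)) := by
    intro l
    rw [hρ, vecMulVec_mul', hw]
    congr 1
    rw [star_mulVec, conjTranspose_conjTranspose]
  have key : ((∀ l, c l = 0) ∨
      ∃ μ : ℂ, (∑ l, ((lam l : ℂ) * c l) • (J l)ᴴ).mulVec ψ = μ • ψ) →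
      LD J lam ρ = 0 := by
    rintro (hall | ⟨μ, hμ⟩)
    · unfold LD
      apply Finset.sum_eq_zero
      intro l _
      have h0 : J l * ρ = 0 := by rw [hJρ l, hall l, zero_smul]
      have h0' : ρ * (J l)ᴴ = 0 := by rw [hρJH l, hall l, star_zero, zero_smul]
      rw [mul_assoc]
      rw [show J l * (ρ * (J l)ᴴ) = 0 by rw [h0', Matrix.mul_zero]]
      rw [show (J l)ᴴ * J l * ρ = 0 by rw [mul_assoc, h0, Matrix.mul_zero]]
      rw [show ρ * ((J l)ᴴ * J l) = 0 by rw [← mul_assoc, h0', Matrix.zero_mul]]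
      simp
    · have hμ' : ∑ l, ((lam l : ℂ) * c l) • w l = μ • ψ := by
        rw [← hμ, sum_mulVec']
        refine Finset.sum_congr rfl fun l _ => ?_
        rw [smul_mulVec]
      have hdot : ∀ l, star ψ ⬝ᵥ w l = star (c l) := by
        intro l
        rw [hw]
        simp only
        rw [dotProduct_mulVec, ← star_mulVec, hc l, star_smul, smul_dotProduct, hψ]
        simp
      have hμval : μ = ∑ l, (lam l : ℂ) * (c l * star (c l)) := by
        have h : star ψ ⬝ᵥ (∑ l, ((lam l : ℂ) * c l) • w l) = star ψ ⬝ᵥ (μ • ψ) := by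
          rw [hμ']
        rw [dotProduct_smul, hψ, smul_eq_mul, mul_one, dotProduct_sum'] at h
        simp only [dotProduct_smul, hdot, smul_eq_mul] at h
        rw [← h]
        refine Finset.sum_congr rfl fun l _ => ?_
        ring
      have hμstar : star μ = μ := by
        rw [hμval, star_sum]
        refine Finset.sum_congr rfl fun l _ => ?_
        simp [mul_comm]
      have hμ'' : ∑ l, ((lam l : ℂ) * star (c l)) • star (w l) = μ • star ψ := by
        have h := congrArg star hμ'
        rw [star_sum, star_smul, hμstar] at h
        rw [← h]
        refine Finset.sum_congr rfl fun l _ => ?_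
        rw [star_smul]
        simp
      unfold LD
      have hterm : ∀ l, J l * ρ * (J l)ᴴ
          - (1 / 2 : ℂ) • ((J l)ᴴ * J l * ρ) - (1 / 2 : ℂ) • (ρ * ((J l)ᴴ * J l))
          = (c l * star (c l)) • ρ - (1 / 2 : ℂ) • (c l • vecMulVec (w l) (star ψ))
            - (1 / 2 : ℂ) • (star (c l) • vecMulVec ψ (star (w l))) := by
        intro l
        rw [Matrix.mul_assoc, hρJH l, Matrix.mul_smul, hJρ l, smul_smul, mul_comm]
        rw [Matrix.mul_assoc, hJρ l, Matrix.mul_smul, hJHρ l]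
        rw [← Matrix.mul_assoc, hρJH l, Matrix.smul_mul, hρJ l]
      ext i j
      rw [Matrix.sum_apply]
      have e1 : ∑ l, (lam l : ℂ) * c l * w l i = μ * ψ i := by
        have h := congrFun hμ' i
        simpa [Finset.sum_apply, Pi.smul_apply, smul_eq_mul] using h
      have e2 : ∑ l, (lam l : ℂ) * star (c l) * star (w l) j = μ * star ψ j := by
        have h := congrFun hμ'' j
        simpa [Finset.sum_apply, Pi.smul_apply, smul_eq_mul] using h
      have hentry : ∀ l ∈ Finset.univ, ((lam l : ℂ) • (J l * ρ * (J l)ᴴ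
          - (1 / 2 : ℂ) • ((J l)ᴴ * J l * ρ) - (1 / 2 : ℂ) • (ρ * ((J l)ᴴ * J l)))) i j
          = ((lam l : ℂ) * (c l * star (c l))) * (ψ i * star ψ j)
            - ((lam l : ℂ) * c l * w l i) * ((1 / 2 : ℂ) * star ψ j)
            - ((1 / 2 : ℂ) * ψ i) * ((lam l : ℂ) * star (c l) * star (w l) j) := by
        intro l _
        rw [hterm l]
        simp [hρ, vecMulVec_apply]
        ring
      rw [Finset.sum_congr rfl hentry, Finset.sum_sub_distrib, Finset.sum_sub_distrib,
        ← Finset.sum_mul, ← Finset.sum_mul, ← Finset.mul_sum, e1, e2, ← hμval]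
      simp only [Matrix.zero_apply]
      ring
  refine ⟨key, fun hne => ⟨?_, fun h => hne (key (Or.inr h))⟩⟩
  by_contra h
  push_neg at h
  exact hne (key (Or.inl h))
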